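/- Let ⟨𝒬, Q₀⟩ be the instance produced by the reduction from an OGTP instance ⟨𝒮, ℱ⟩, and let H be a final position of a play of Escape(Q₀, 𝒬) obeying Principles I and II, where the vertices of the initial chain D₀ = (G(q))[a,b], q ∈ Q_start, are a, x₁, …, xₙ, b in path order. Then for each vertex y of H with y ≠ a there exist in H a path consisting of red edges from x₁ to y and a path consisting of green edges from x₁ to y; and for each vertex y of H with y ≠ b there exist in H a path of red edges from y to xₙ and a path of green edges from y to xₙ. -/

import Mathlib

/-- A graph database (structure) over vertex type `V` and edge-label alphabet `γ`:
`D x c y` means that there is an edge from `x` to `y` labeled with `c`. -/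
def DB (V γ : Type) : Type := V → γ → V → Prop

/-- `pathSat D x w y` : the structure `D` satisfies `w(x,y)`, i.e. there is a directed
path from `x` to `y` whose consecutive edge labels spell the word `w`. -/
def pathSat {V γ : Type} (D : DB V γ) : V → List γ → V → Prop
  | x, [], y => x = y
  | x, c :: w, y => ∃ z, D x c z ∧ pathSat D z w y

/-- `D ⊨ L(x,y)` for a language `L` : some word of `L` labels a path from `x` to `y`. -/
def langSat {V γ : Type} (D : DB V γ) (L : Language γ) (x y : V) : Prop :=
  ∃ w ∈ L, pathSat D x w y

/-- The answer `L(D)` of the path query given by the language `L` on the database `D`. -/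
def qry {V γ : Type} (L : Language γ) (D : DB V γ) : Set (V × V) :=
  { p | langSat D L p.1 p.2 }

/-- All edge labels of `D` lie in the set `A`. -/
def labelsIn {V γ : Type} (D : DB V γ) (A : Set γ) : Prop :=
  ∀ x c y, D x c y → c ∈ A

/-- A language is regular iff it is the language of some regular expression. -/
def IsRegularLang {γ : Type} (L : Language γ) : Prop :=
  ∃ r : RegularExpression γ, r.matches' = L

/-! ### Red-green signature.  A letter of `Σ̄` is a pair `(color, a)` with
`color = true` meaning green and `color = false` meaning red. -/

/-- The green copy `G(w)` of a word `w`. -/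
def greenW {γ : Type} (w : List γ) : List (Bool × γ) := w.map (fun c => (true, c))

/-- The red copy `R(w)` of a word `w`. -/
def redW {γ : Type} (w : List γ) : List (Bool × γ) := w.map (fun c => (false, c))

/-- The green copy `G(L)` of a language `L`. -/
def greenL {γ : Type} (L : Language γ) : Language (Bool × γ) := greenW '' L

/-- The red copy `R(L)` of a language `L`. -/
def redL {γ : Type} (L : Language γ) : Language (Bool × γ) := redW '' L

/-- A constraint `L → L'` given by a pair of languages,
meaning `∀ x y, L(x,y) ⇒ L'(x,y)`. -/
structure RCon (γ : Type) where
  lhs : Language γ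
  rhs : Language γ

/-- `D ⊨ t` for a single constraint `t`. -/
def satRC {V γ : Type} (D : DB V γ) (t : RCon γ) : Prop :=
  ∀ x y, langSat D t.lhs x y → langSat D t.rhs x y

/-- `D ⊨ T` for a set `T` of constraints. -/
def satRCs {V γ : Type} (D : DB V γ) (T : Set (RCon γ)) : Prop :=
  ∀ t ∈ T, satRC D t

/-- `L→`, the regular constraint `G(L) → R(L)`. -/
def rcFwd {γ : Type} (L : Language γ) : RCon (Bool × γ) := ⟨greenL L, redL L⟩

/-- `L←`, the regular constraint `R(L) → G(L)`. -/
def rcBwd {γ : Type} (L : Language γ) : RCon (Bool × γ) := ⟨redL L, greenL L⟩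

/-- `𝒬↔ = ⋃_{L ∈ 𝒬} {L→, L←}`. -/
def biRC {γ : Type} (Qs : Set (Language γ)) : Set (RCon (Bool × γ)) :=
  rcFwd '' Qs ∪ rcBwd '' Qs

/-- A request is a triple `⟨x, y, t⟩`. -/
abbrev Req (V γ : Type) := V × V × RCon γ

/-- `rq T D` : the set of requests `⟨x,y,L→L'⟩` with `L → L' ∈ T`, `D ⊨ L(x,y)`
and `D ⊭ L'(x,y)`. -/
def rq {V γ : Type} (T : Set (RCon γ)) (D : DB V γ) : Set (Req V γ) :=
  { r | r.2.2 ∈ T ∧ langSat D r.2.2.lhs r.1 r.2.1 ∧ ¬ langSat D r.2.2.rhs r.1 r.2.1 }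

/-- A vertex of (i.e. active in) the structure `D`. -/
def activeV {V γ : Type} (D : DB V γ) (v : V) : Prop :=
  ∃ c u, D v c u ∨ D u c v

/-- The edge set of a chain whose consecutive vertices are listed in the first argument
and whose edge labels spell the second argument.  -/
def chainOf {V γ : Type} : List V → List γ → DB V γ
  | u :: v :: vs, c :: w => fun p d q => (p = u ∧ d = c ∧ q = v) ∨ chainOf (v :: vs) w p d q
  | _, _ => fun _ _ _ => False

/-- `D` is (exactly) the chain structure `w[x,y]` : its edges form a chain from `x` to `y`
labeled `w`, whose internal vertices are pairwise distinct and distinct from `x, y`. -/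
def IsChainStruct {V γ : Type} (D : DB V γ) (x : V) (w : List γ) (y : V) : Prop :=
  ∃ vs : List V, vs.length + 1 = w.length ∧ (x :: vs ++ [y]).Nodup ∧
    ∀ p c q, D p c q ↔ chainOf (x :: vs ++ [y]) w p c q

/-- `Step T D D'` : `D'` is obtained from `D` by simultaneously satisfying every request of
`rq T D` : for each request `⟨x,y,t⟩` a word `w` of the right-hand side of `t` is chosen and a
fresh path `w[x,y]` is added, the internal vertices of all the added paths being new
(not vertices of `D`) and pairwise distinct. -/
def Step {V γ : Type} (T : Set (RCon γ)) (D D' : DB V γ) : Prop :=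
  ∃ (wch : Req V γ → List γ) (vch : Req V γ → List V),
    (∀ r ∈ rq T D,
      wch r ∈ (r.2.2).rhs ∧ (vch r).length + 1 = (wch r).length ∧ (vch r).Nodup ∧
      ∀ v ∈ vch r, ¬ activeV D v ∧ v ≠ r.1 ∧ v ≠ r.2.1) ∧
    (∀ r ∈ rq T D, ∀ r' ∈ rq T D, r ≠ r' → ∀ v ∈ vch r, v ∉ vch r') ∧
    ∀ p c q, D' p c q ↔
      (D p c q ∨ ∃ r ∈ rq T D, chainOf (r.1 :: vch r ++ [r.2.1]) (wch r) p c q)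

/-- `H ∈ Ω(T, D₀)` : `H` is a final position, namely the union of a play
`D₀, D₁, D₂, …` with `Step T Dᵢ Dᵢ₊₁` for all `i`. -/
def FinalPos {V γ : Type} (T : Set (RCon γ)) (D₀ H : DB V γ) : Prop :=
  ∃ seq : ℕ → DB V γ, seq 0 = D₀ ∧ (∀ i, Step T (seq i) (seq (i + 1))) ∧
    ∀ p c q, H p c q ↔ ∃ i, seq i p c q

/-- `h` is a homomorphism from `D` to `M`. -/
def IsHom {V W γ : Type} (D : DB V γ) (M : DB W γ) (h : V → W) : Prop :=
  ∀ x c y, D x c y → M (h x) c (h y)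

/-! ### The alphabet of the reduction.
`Σ = {α, β, ω} ∪ Σ₀` with `Σ₀ = {A,B} × {H,V} × {W,C} × 𝒮`.
Conventions: in `Sig.base ab dir temp shade`,
`ab = true` means `A` and `ab = false` means `B`;
`dir = false` means `H` (horizontal) and `dir = true` means `V` (vertical);
`temp = true` means `W` (warm) and `temp = false` means `C` (cold);
shades are natural numbers, `black := 0`. -/
inductive Sig : Type where
  | alpha : Sig
  | beta : Sig
  | omega : Sig
  | base : Bool → Bool → Bool → ℕ → Sig
deriving DecidableEq

/-- `c` is a letter of `Σ₀` (its shade belonging to `S`). -/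
def inSigma0 (S : Finset ℕ) : Sig → Prop
  | .base _ _ _ s => s ∈ S
  | _ => False

/-- `c` is a letter of `Σ₀` with the indicated first three components
(its shade ranging over `S`). -/
def isL (S : Finset ℕ) (ab dir temp : Bool) (c : Sig) : Prop :=
  ∃ s ∈ S, c = Sig.base ab dir temp s

/-- All letters of the word `u` belong to `Σ₀`. -/
def allS0 (S : Finset ℕ) (u : List Sig) : Prop := ∀ c ∈ u, inSigma0 S c

/-- `Q¹ = ω`. -/
def Qg1 : Language Sig := {[Sig.omega]}

/-- `Q² = α + β`. -/
def Qg2 : Language Sig := {[Sig.alpha], [Sig.beta]}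

/-- `[B H W][A V W]`, the first summand of `Q³`. -/
def Qg3a (S : Finset ℕ) : Language Sig :=
  { w | ∃ c1 c2, w = [c1, c2] ∧ isL S false false true c1 ∧ isL S true true true c2 }

/-- `[B V C][A H C]`, the second summand of `Q³`. -/
def Qg3b (S : Finset ℕ) : Language Sig :=
  { w | ∃ c1 c2, w = [c1, c2] ∧ isL S false true false c1 ∧ isL S true false false c2 }

/-- `[A H C][B V C]`, the first summand of `Q⁴`. -/
def Qg4a (S : Finset ℕ) : Language Sig :=
  { w | ∃ c1 c2, w = [c1, c2] ∧ isL S true false false c1 ∧ isL S false true false c2 }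

/-- `[A V W][B H W]`, the second summand of `Q⁴`. -/
def Qg4b (S : Finset ℕ) : Language Sig :=
  { w | ∃ c1 c2, w = [c1, c2] ∧ isL S true true true c1 ∧ isL S false false true c2 }

/-- `[B V C]`, the first summand of `Q⁵`. -/
def Qg5a (S : Finset ℕ) : Language Sig := { w | ∃ c, w = [c] ∧ isL S false true false c }

/-- `[B V W]`, the second summand of `Q⁵`. -/
def Qg5b (S : Finset ℕ) : Language Sig := { w | ∃ c, w = [c] ∧ isL S false true true c }

/-- `[B H W]`, the first summand of `Q⁶`. -/
def Qg6a (S : Finset ℕ) : Language Sig := { w | ∃ c, w = [c] ∧ isL S false false true c }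

/-- `[B H C]`, the second summand of `Q⁶`. -/
def Qg6b (S : Finset ℕ) : Language Sig := { w | ∃ c, w = [c] ∧ isL S false false false c }

/-- `[A V W]`, the first summand of `Q⁷`. -/
def Qg7a (S : Finset ℕ) : Language Sig := { w | ∃ c, w = [c] ∧ isL S true true true c }

/-- `[A V C]`, the second summand of `Q⁷`. -/
def Qg7b (S : Finset ℕ) : Language Sig := { w | ∃ c, w = [c] ∧ isL S true true false c }

/-- `[A H C]`, the first summand of `Q⁸`. -/
def Qg8a (S : Finset ℕ) : Language Sig := { w | ∃ c, w = [c] ∧ isL S true false false c }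

/-- `[A H W]`, the second summand of `Q⁸`. -/
def Qg8b (S : Finset ℕ) : Language Sig := { w | ∃ c, w = [c] ∧ isL S true false true c }

/-- `𝒬_good`, the set of 8 good languages. -/
def Qgood (S : Finset ℕ) : Set (Language Sig) :=
  {Qg1, Qg2, Qg3a S + Qg3b S, Qg4a S + Qg4b S, Qg5a S + Qg5b S,
   Qg6a S + Qg6b S, Qg7a S + Qg7b S, Qg8a S + Qg8b S}

/-- `β (Σ_{s ∈ 𝒮∖{black}} [A V W s]) Σ₀* ω`. -/
def Qbad1 (S : Finset ℕ) : Language Sig :=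
  { w | ∃ s u, s ∈ S ∧ s ≠ 0 ∧ allS0 S u ∧
      w = Sig.beta :: Sig.base true true true s :: (u ++ [Sig.omega]) }

/-- `β Σ₀* (Σ_{s ∈ 𝒮∖{black}} [B H W s]) ω`. -/
def Qbad2 (S : Finset ℕ) : Language Sig :=
  { w | ∃ s u, s ∈ S ∧ s ≠ 0 ∧ allS0 S u ∧
      w = Sig.beta :: (u ++ [Sig.base false false true s, Sig.omega]) }

/-- `β Σ₀* [• d W s][• d' W s'] Σ₀* ω`, for a forbidden pair `⟨(d,s),(d',s')⟩`. -/
def QbadF (S : Finset ℕ) (d : Bool) (s : ℕ) (d' : Bool) (s' : ℕ) : Language Sig :=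
  { w | ∃ u u', ∃ b b' : Bool, allS0 S u ∧ allS0 S u' ∧
      w = Sig.beta :: (u ++ Sig.base b d true s :: Sig.base b' d' true s' :: (u' ++ [Sig.omega])) }

/-- `𝒬_bad`. -/
def Qbad (S : Finset ℕ) (F : Finset ((Bool × ℕ) × (Bool × ℕ))) : Set (Language Sig) :=
  {Qbad1 S, Qbad2 S} ∪ { L | ∃ p ∈ F, L = QbadF S p.1.1 p.1.2 p.2.1 p.2.2 }

/-- `α Σ₀* [• • W] Σ₀* ω`. -/
def Qugly1 (S : Finset ℕ) : Language Sig :=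
  { w | ∃ u c u', allS0 S u ∧ allS0 S u' ∧ inSigma0 S c ∧
      (∃ ab d s, c = Sig.base ab d true s) ∧
      w = Sig.alpha :: (u ++ c :: (u' ++ [Sig.omega])) }

/-- `β Σ₀* [• • C] Σ₀* ω`. -/
def Qugly2 (S : Finset ℕ) : Language Sig :=
  { w | ∃ u c u', allS0 S u ∧ allS0 S u' ∧ inSigma0 S c ∧
      (∃ ab d s, c = Sig.base ab d false s) ∧
      w = Sig.beta :: (u ++ c :: (u' ++ [Sig.omega])) }

/-- `𝒬_ugly`. -/
def Qugly (S : Finset ℕ) : Set (Language Sig) := {Qugly1 S, Qugly2 S}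

/-- `𝒬 = 𝒬_good ∪ 𝒬_bad ∪ 𝒬_ugly`. -/
def QQ (S : Finset ℕ) (F : Finset ((Bool × ℕ) × (Bool × ℕ))) : Set (Language Sig) :=
  Qgood S ∪ Qbad S F ∪ Qugly S

/-- `[A H C][B V C]`, the repeated block of `Q_start`. -/
def startBlock (S : Finset ℕ) : Language Sig :=
  { w | ∃ c1 c2, w = [c1, c2] ∧ isL S true false false c1 ∧ isL S false true false c2 }

/-- `Q_start = α ([A H C][B V C])⁺ ω`. -/
def Qstart (S : Finset ℕ) : Language Sig :=
  { w | ∃ u, u ∈ KStar.kstar (startBlock S) ∧ u ≠ [] ∧ w = Sig.alpha :: (u ++ [Sig.omega]) }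

/-- The sum of the languages `QbadF` over all forbidden pairs of `F`. -/
def QbadFSum (S : Finset ℕ) (F : Finset ((Bool × ℕ) × (Bool × ℕ))) : Language Sig :=
  { w | ∃ p ∈ F, w ∈ QbadF S p.1.1 p.1.2 p.2.1 p.2.2 }

/-- `Q₀ = Q_start + Σ_{L ∈ 𝒬_bad ∪ 𝒬_ugly} L`. -/
def Q0L (S : Finset ℕ) (F : Finset ((Bool × ℕ) × (Bool × ℕ))) : Language Sig :=
  Qstart S + Qbad1 S + Qbad2 S + QbadFSum S F + Qugly1 S + Qugly2 S

/-- The alphabet `Σ = {α, β, ω} ∪ Σ₀` of the reduction, as a set of letters. -/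
def SigAlph (S : Finset ℕ) : Set Sig :=
  {Sig.alpha, Sig.beta, Sig.omega} ∪ { c | inSigma0 S c }

/-! Along the play we keep an invariant (`PlayInvariant`): every label lies in `Σ`, the edges
leaving `a` and entering `b` carry markers (`α`, `β`, `ω`) rather than letters of `Σ₀`, every
active vertex other than `a` is reachable from `x₁`, and every active vertex other than `b`
reaches `xₙ`. By Principle II only requests of good languages are ever answered. A good
language either consists of single markers or of `Σ₀`-words of length 1 or 2, so a new vertex
only appears in the middle of a two-letter `Σ₀`-path added between old vertices that can be
neither `a` nor `b`; it inherits reachability from them. Finally, the words of a good language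
all have the same length, so every letter lies in a good language of one-letter words; in the
final position every edge therefore has a red and a green parallel edge, and every path can be
repainted in either colour. -/

open Relation

section Paths

variable {V γ : Type}

def DB.Adj (D : DB V γ) (x y : V) : Prop := ∃ c, D x c y

/-- `greenW = paint true` and `redW = paint false`. -/
def paint (col : Bool) (w : List γ) : List (Bool × γ) := w.map (Prod.mk col)

theorem pathSat_mono {D D' : DB V γ} (h : ∀ p c q, D p c q → D' p c q) :
    ∀ {w : List γ} {x y : V}, pathSat D x w y → pathSat D' x w y
  | [], _, _, hp => hp
  | _ :: _, _, _, ⟨z, hz, hp⟩ => ⟨z, h _ _ _ hz, pathSat_mono h hp⟩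

theorem pathSat_append {D : DB V γ} :
    ∀ {w w' : List γ} {x z : V},
      pathSat D x (w ++ w') z ↔ ∃ y, pathSat D x w y ∧ pathSat D y w' z
  | [], _, _, _ => ⟨fun h => ⟨_, rfl, h⟩, fun ⟨_, hxy, h⟩ => hxy ▸ h⟩
  | c :: w, w', x, z => by
      simp only [List.cons_append, pathSat, pathSat_append]
      exact ⟨fun ⟨u, hu, y, h, h'⟩ => ⟨y, ⟨u, hu, h⟩, h'⟩,
        fun ⟨y, ⟨u, hu, h⟩, h'⟩ => ⟨u, hu, y, h, h'⟩⟩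

theorem exists_edge_of_pathSat_append_singleton {D : DB V γ} {w : List γ} {c : γ} {x y : V}
    (h : pathSat D x (w ++ [c]) y) : ∃ z, D z c y := by
  obtain ⟨z, -, y', hzy', rfl⟩ := pathSat_append.1 h
  exact ⟨z, hzy'⟩

theorem activeV_of_pathSat {D : DB V γ} {w : List γ} {x y : V} (hw : w ≠ [])
    (h : pathSat D x w y) : activeV D x ∧ activeV D y := by
  obtain ⟨c, w', rfl⟩ := List.exists_cons_of_ne_nil hw
  obtain ⟨w₀, d, hw₀⟩ :=
    (List.eq_nil_or_concat' (c :: w')).resolve_left (List.cons_ne_nil _ _)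
  obtain ⟨u, hu⟩ := exists_edge_of_pathSat_append_singleton (hw₀ ▸ h)
  obtain ⟨z, hxz, -⟩ := h
  exact ⟨⟨c, z, Or.inl hxz⟩, ⟨d, u, Or.inr hu⟩⟩

theorem activeV_mono {D D' : DB V γ} (h : ∀ p c q, D p c q → D' p c q) {v : V}
    (hv : activeV D v) : activeV D' v :=
  let ⟨c, u, hu⟩ := hv
  ⟨c, u, hu.imp (h _ _ _) (h _ _ _)⟩

theorem reflTransGen_adj_mono {D D' : DB V γ} (h : ∀ p c q, D p c q → D' p c q) {x y : V}
    (hxy : ReflTransGen D.Adj x y) : ReflTransGen D'.Adj x y :=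
  ReflTransGen.mono (fun _ _ ⟨c, hc⟩ => ⟨c, h _ _ _ hc⟩) _ _ hxy

theorem exists_pathSat_paint_of_reflTransGen {D : DB V (Bool × γ)} (col : Bool)
    (hpar : ∀ p c q, D p c q → ∃ c', D p (col, c') q) {x y : V}
    (h : ReflTransGen D.Adj x y) : ∃ w, pathSat D x (paint col w) y := by
  induction h using ReflTransGen.head_induction_on with
  | refl => exact ⟨[], rfl⟩
  | head hxz _ ih =>
      obtain ⟨c, hc⟩ := hxz
      obtain ⟨c', hc'⟩ := hpar _ _ _ hc
      obtain ⟨w, hw⟩ := ih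
      exact ⟨c' :: w, _, hc', hw⟩

end Paths

section Chains

variable {V γ : Type} {p q : V} {c : γ}

theorem chainOf_mem : ∀ {l : List V} {w : List γ},
    chainOf l w p c q → p ∈ l.dropLast ∧ c ∈ w ∧ q ∈ l.tail
  | u :: v :: l, d :: w, h => by
      rcases h with ⟨rfl, rfl, rfl⟩ | h
      · simp
      · obtain ⟨hp, hc, hq⟩ := chainOf_mem h
        exact ⟨List.mem_cons_of_mem _ hp, List.mem_cons_of_mem _ hc, List.mem_cons_of_mem _ hq⟩
  | [], _, h | [_], _, h | _ :: _ :: _, [], h => h.elim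

theorem chainOf_source_mem {x y : V} {vs : List V} {w : List γ}
    (h : chainOf (x :: vs ++ [y]) w p c q) : p ∈ x :: vs := by
  have hp := (chainOf_mem h).1
  rwa [List.dropLast_concat] at hp

theorem chainOf_target_mem {x y : V} {vs : List V} {w : List γ}
    (h : chainOf (x :: vs ++ [y]) w p c q) : q ∈ vs ++ [y] :=
  (chainOf_mem h).2.2

theorem mem_of_activeV_of_chainOf {D : DB V γ} {l : List V} {w : List γ}
    (hD : ∀ p c q, D p c q ↔ chainOf l w p c q) {v : V} (hv : activeV D v) : v ∈ l := by
  obtain ⟨c, u, hvu | huv⟩ := hv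
  · exact List.dropLast_subset _ (chainOf_mem ((hD _ _ _).1 hvu)).1
  · exact List.tail_subset _ (chainOf_mem ((hD _ _ _).1 huv)).2.2

theorem chainOf_append_singleton {y : V} {d : γ} : ∀ {l : List V} {w : List γ},
    chainOf l w p c q → chainOf (l ++ [y]) (w ++ [d]) p c q
  | _ :: _ :: _, _ :: _, h => h.imp id chainOf_append_singleton
  | [], _, h | [_], _, h | _ :: _ :: _, [], h => h.elim

theorem chainOf_append_singleton_cases {y : V} {d : γ} : ∀ {l : List V} {w : List γ},
    l.length = w.length + 1 → chainOf (l ++ [y]) (w ++ [d]) p c q → chainOf l w p c q ∨ c = d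
  | [_], [], _, h => by
      rcases h with ⟨-, rfl, -⟩ | h
      · exact Or.inr rfl
      · exact h.elim
  | _ :: _ :: _, _ :: _, hlen, h => by
      rcases h with h | h
      · exact Or.inl (Or.inl h)
      · exact (chainOf_append_singleton_cases (by simpa using hlen) h).imp_left Or.inr
  | [], _, hlen, _ | [_], _ :: _, hlen, _ | _ :: _ :: _, [], hlen, _ => by simp at hlen

theorem pathSat_of_chainOf {D : DB V γ} {y : V} : ∀ {x : V} {vs : List V} {w : List γ},
    vs.length + 1 = w.length → (∀ p c q, chainOf (x :: vs ++ [y]) w p c q → D p c q) →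
      pathSat D x w y
  | _, [], [_], _, hD => ⟨y, hD _ _ _ (Or.inl ⟨rfl, rfl, rfl⟩), rfl⟩
  | _, v :: _, _ :: _, hlen, hD =>
      ⟨v, hD _ _ _ (Or.inl ⟨rfl, rfl, rfl⟩),
        pathSat_of_chainOf (by simpa using hlen) fun _ _ _ h => hD _ _ _ (Or.inr h)⟩
  | _, [], [], hlen, _ | _, [], _ :: _ :: _, hlen, _ | _, _ :: _, [], hlen, _ => by
      simp at hlen

theorem reflTransGen_of_chainOf {D : DB V γ} : ∀ {x : V} {l : List V} {w : List γ},
    l.length = w.length → (∀ p c q, chainOf (x :: l) w p c q → D p c q) →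
      ∀ v ∈ x :: l, ReflTransGen D.Adj x v ∧
        ReflTransGen D.Adj v ((x :: l).getLast (List.cons_ne_nil x l))
  | _, [], _, _, _, v, hv => by
      rw [List.mem_singleton.1 hv]
      exact ⟨.refl, .refl⟩
  | x, u :: l, d :: w, hlen, hD, v, hv => by
      have hxu : D.Adj x u := ⟨d, hD _ _ _ (Or.inl ⟨rfl, rfl, rfl⟩)⟩
      have ih := reflTransGen_of_chainOf (by simpa using hlen)
        (fun _ _ _ h => hD _ _ _ (Or.inr h))
      rw [List.getLast_cons_cons]
      rcases List.mem_cons.1 hv with rfl | hv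
      · exact ⟨.refl, .head hxu (ih u List.mem_cons_self).2⟩
      · exact ⟨.head hxu (ih v hv).1, (ih v hv).2⟩
  | _, _ :: _, [], hlen, _, _, _ => by simp at hlen

end Chains

section Steps

variable {V γ : Type} {T : Set (RCon γ)} {D D' : DB V γ}

theorem Step.mono (h : Step T D D') : ∀ p c q, D p c q → D' p c q :=
  let ⟨_, _, _, _, hD'⟩ := h
  fun p c q hD => (hD' p c q).2 (Or.inl hD)

theorem Step.langSat_rhs (h : Step T D D') {t : RCon γ} (ht : t ∈ T) {x y : V}
    (hl : langSat D t.lhs x y) : langSat D' t.rhs x y := by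
  by_cases hr : langSat D t.rhs x y
  · obtain ⟨w, hw, hp⟩ := hr
    exact ⟨w, hw, pathSat_mono h.mono hp⟩
  · obtain ⟨wch, vch, hadd, -, hD'⟩ := h
    have hreq : (x, y, t) ∈ rq T D := ⟨ht, hl, hr⟩
    obtain ⟨hw, hlen, -⟩ := hadd _ hreq
    exact ⟨_, hw, pathSat_of_chainOf hlen fun p c q hc =>
      (hD' p c q).2 (Or.inr ⟨_, hreq, hc⟩)⟩

theorem Step.cases (h : Step T D D') {p q : V} {c : γ} (hpq : D' p c q) :
    D p c q ∨ ∃ r ∈ rq T D, ∃ w ∈ r.2.2.rhs, ∃ vs : List V, vs.length + 1 = w.length ∧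
      (∀ v ∈ vs, ¬ activeV D v) ∧
      (∀ p c q, chainOf (r.1 :: vs ++ [r.2.1]) w p c q → D' p c q) ∧
      chainOf (r.1 :: vs ++ [r.2.1]) w p c q := by
  obtain ⟨wch, vch, hadd, -, hD'⟩ := h
  refine ((hD' p c q).1 hpq).imp_right fun ⟨r, hr, hc⟩ => ?_
  obtain ⟨hw, hlen, -, hfresh⟩ := hadd r hr
  exact ⟨r, hr, wch r, hw, vch r, hlen, fun v hv => (hfresh v hv).1,
    fun p c q hc => (hD' p c q).2 (Or.inr ⟨r, hr, hc⟩), hc⟩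

theorem langSat_rhs_of_play {seq : ℕ → DB V γ} {H : DB V γ}
    (hstep : ∀ i, Step T (seq i) (seq (i + 1))) (hH : ∀ p c q, H p c q ↔ ∃ i, seq i p c q)
    {t : RCon γ} (ht : t ∈ T) {i : ℕ} {x y : V} (hl : langSat (seq i) t.lhs x y) :
    langSat H t.rhs x y :=
  let ⟨w, hw, hp⟩ := (hstep i).langSat_rhs ht hl
  ⟨w, hw, pathSat_mono (fun p c q h => (hH p c q).2 ⟨i + 1, h⟩) hp⟩

theorem exists_activeV_of_play {seq : ℕ → DB V γ} {H : DB V γ}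
    (hH : ∀ p c q, H p c q ↔ ∃ i, seq i p c q) {v : V} (hv : activeV H v) :
    ∃ i, activeV (seq i) v := by
  obtain ⟨c, u, hvu | huv⟩ := hv
  · obtain ⟨i, h⟩ := (hH v c u).1 hvu
    exact ⟨i, c, u, Or.inl h⟩
  · obtain ⟨i, h⟩ := (hH u c v).1 huv
    exact ⟨i, c, u, Or.inr h⟩

end Steps

section Reduction

variable {S : Finset ℕ}

theorem inSigma0_of_isL {ab d t : Bool} {c : Sig} (h : isL S ab d t c) : inSigma0 S c := by
  obtain ⟨s, hs, rfl⟩ := h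
  exact hs

theorem not_inSigma0_of_mem_markers {c : Sig}
    (hc : c ∈ ({Sig.alpha, Sig.beta, Sig.omega} : Set Sig)) : ¬ inSigma0 S c := by
  rcases hc with rfl | rfl | rfl <;> exact id

theorem inSigma0_of_mem_kstar_startBlock {u : List Sig} (hu : u ∈ KStar.kstar (startBlock S)) :
    ∀ c ∈ u, inSigma0 S c := by
  obtain ⟨ws, rfl, hws⟩ := Language.mem_kstar.1 hu
  intro c hc
  obtain ⟨w, hw, hcw⟩ := List.mem_flatten.1 hc
  obtain ⟨c₁, c₂, rfl, h₁, h₂⟩ := hws w hw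
  rcases List.mem_pair.1 hcw with rfl | rfl
  exacts [inSigma0_of_isL h₁, inSigma0_of_isL h₂]

theorem mem_SigAlph_of_mem_start {us : List Sig} (hus : ∀ c ∈ us, inSigma0 S c) {d : Sig}
    (hd : d ∈ Sig.alpha :: (us ++ [Sig.omega])) : d ∈ SigAlph S := by
  simp only [List.mem_cons, List.mem_append, List.not_mem_nil, or_false] at hd
  rcases hd with rfl | hd | rfl
  exacts [Or.inl (by simp), Or.inr (hus d hd), Or.inl (by simp)]

theorem Qgood_cases {L : Language Sig} (hL : L ∈ Qgood S) :
    (∀ u ∈ L, ∃ c ∈ ({Sig.alpha, Sig.beta, Sig.omega} : Set Sig), u = [c]) ∨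
      ∀ u ∈ L, u ≠ [] ∧ ∀ c ∈ u, inSigma0 S c := by
  simp only [Qgood, Set.mem_insert_iff, Set.mem_singleton_iff] at hL
  rcases hL with rfl | rfl | rfl | rfl | rfl | rfl | rfl | rfl
  · exact Or.inl fun u hu => ⟨_, by simp, hu⟩
  · exact Or.inl fun u hu => by rcases hu with rfl | rfl <;> exact ⟨_, by simp, rfl⟩
  iterate 2
    refine Or.inr fun u hu => ?_
    rcases hu with ⟨c₁, c₂, rfl, h₁, h₂⟩ | ⟨c₁, c₂, rfl, h₁, h₂⟩ <;>
      simp [inSigma0_of_isL h₁, inSigma0_of_isL h₂]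
  all_goals
    refine Or.inr fun u hu => ?_
    rcases hu with ⟨c, rfl, h⟩ | ⟨c, rfl, h⟩ <;> simp [inSigma0_of_isL h]

theorem Qgood_ne_nil {L : Language Sig} (hL : L ∈ Qgood S) {u : List Sig} (hu : u ∈ L) :
    u ≠ [] := by
  rcases Qgood_cases hL with h | h
  · obtain ⟨c, -, rfl⟩ := h u hu
    exact List.cons_ne_nil _ _
  · exact (h u hu).1

theorem mem_SigAlph_of_mem_Qgood {L : Language Sig} (hL : L ∈ Qgood S) {u : List Sig}
    (hu : u ∈ L) {c : Sig} (hc : c ∈ u) : c ∈ SigAlph S := by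
  rcases Qgood_cases hL with h | h
  · obtain ⟨d, hd, rfl⟩ := h u hu
    exact Or.inl (List.mem_singleton.1 hc ▸ hd)
  · exact Or.inr ((h u hu).2 c hc)

theorem exists_length_of_Qgood {L : Language Sig} (hL : L ∈ Qgood S) :
    ∃ n, ∀ u ∈ L, u.length = n := by
  simp only [Qgood, Set.mem_insert_iff, Set.mem_singleton_iff] at hL
  rcases hL with rfl | rfl | rfl | rfl | rfl | rfl | rfl | rfl
  · exact ⟨1, by rintro u rfl; rfl⟩
  · exact ⟨1, by rintro u (rfl | rfl) <;> rfl⟩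
  iterate 2 exact ⟨2, by rintro u (⟨_, _, rfl, -⟩ | ⟨_, _, rfl, -⟩) <;> rfl⟩
  all_goals exact ⟨1, by rintro u (⟨_, rfl, -⟩ | ⟨_, rfl, -⟩) <;> rfl⟩

theorem exists_Qgood_singleton {c : Sig} (hc : c ∈ SigAlph S) : ∃ L ∈ Qgood S, [c] ∈ L := by
  rcases hc with (rfl | rfl | rfl) | hc
  · exact ⟨Qg2, by simp [Qgood], Or.inl rfl⟩
  · exact ⟨Qg2, by simp [Qgood], Or.inr rfl⟩
  · exact ⟨Qg1, by simp [Qgood], rfl⟩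
  cases c with
  | base ab d t s =>
    have hs : s ∈ S := hc
    cases ab <;> cases d <;> cases t
    exacts [⟨Qg6a S + Qg6b S, by simp [Qgood], Or.inr ⟨_, rfl, s, hs, rfl⟩⟩,
      ⟨Qg6a S + Qg6b S, by simp [Qgood], Or.inl ⟨_, rfl, s, hs, rfl⟩⟩,
      ⟨Qg5a S + Qg5b S, by simp [Qgood], Or.inl ⟨_, rfl, s, hs, rfl⟩⟩,
      ⟨Qg5a S + Qg5b S, by simp [Qgood], Or.inr ⟨_, rfl, s, hs, rfl⟩⟩,
      ⟨Qg8a S + Qg8b S, by simp [Qgood], Or.inl ⟨_, rfl, s, hs, rfl⟩⟩,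
      ⟨Qg8a S + Qg8b S, by simp [Qgood], Or.inr ⟨_, rfl, s, hs, rfl⟩⟩,
      ⟨Qg7a S + Qg7b S, by simp [Qgood], Or.inr ⟨_, rfl, s, hs, rfl⟩⟩,
      ⟨Qg7a S + Qg7b S, by simp [Qgood], Or.inl ⟨_, rfl, s, hs, rfl⟩⟩]
  | _ => exact hc.elim

end Reduction

section Invariant

variable {V : Type} {S : Finset ℕ} {F : Finset ((Bool × ℕ) × (Bool × ℕ))}
  {D D' : DB V (Bool × Sig)} {a b x₁ xₙ x y : V} {w : List (Bool × Sig)}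

def SatisfiesPrincipleII (S : Finset ℕ) (F : Finset ((Bool × ℕ) × (Bool × ℕ)))
    (D : DB V (Bool × Sig)) : Prop :=
  ∀ x y, ∀ L ∈ Qbad S F ∪ Qugly S, ¬ langSat D (greenL L) x y ∧ ¬ langSat D (redL L) x y

def AnswersGoodRequest (S : Finset ℕ) (D : DB V (Bool × Sig)) (x y : V)
    (w : List (Bool × Sig)) : Prop :=
  ∃ L ∈ Qgood S, (∃ u ∈ L, ∃ col, pathSat D x (paint col u) y) ∧
    ∃ u ∈ L, ∃ col, w = paint col u

theorem mem_Qgood_of_langSat (hII : SatisfiesPrincipleII S F D) {L : Language Sig}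
    (hL : L ∈ QQ S F) (h : langSat D (greenL L) x y ∨ langSat D (redL L) x y) :
    L ∈ Qgood S := by
  rcases hL with (hL | hL) | hL
  · exact hL
  · exact (not_or.2 (hII x y L (Or.inl hL)) h).elim
  · exact (not_or.2 (hII x y L (Or.inr hL)) h).elim

theorem answersGoodRequest_of_mem_rq (hII : SatisfiesPrincipleII S F D)
    {r : Req V (Bool × Sig)} (hr : r ∈ rq (biRC (QQ S F)) D) (hw : w ∈ r.2.2.rhs) :
    AnswersGoodRequest S D r.1 r.2.1 w := by
  obtain ⟨⟨L, hL, ht⟩ | ⟨L, hL, ht⟩, hl, -⟩ := hr <;> rw [← ht] at hl hw <;>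
    obtain ⟨_, ⟨u, hu, rfl⟩, hp⟩ := hl <;> obtain ⟨u', hu', rfl⟩ := hw
  · exact ⟨L, mem_Qgood_of_langSat hII hL (Or.inl ⟨_, ⟨u, hu, rfl⟩, hp⟩),
      ⟨u, hu, true, hp⟩, u', hu', false, rfl⟩
  · exact ⟨L, mem_Qgood_of_langSat hII hL (Or.inr ⟨_, ⟨u, hu, rfl⟩, hp⟩),
      ⟨u, hu, false, hp⟩, u', hu', true, rfl⟩

structure PlayInvariant (S : Finset ℕ) (a b x₁ xₙ : V) (D : DB V (Bool × Sig)) : Prop where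
  labels : labelsIn D (Prod.snd ⁻¹' SigAlph S)
  out_a : ∀ c q, D a c q → ¬ inSigma0 S c.2
  in_b : ∀ p c, D p c b → ¬ inSigma0 S c.2
  active_a : activeV D a
  active_b : activeV D b
  reach : ∀ v, activeV D v →
    (v ≠ a → ReflTransGen D.Adj x₁ v) ∧ (v ≠ b → ReflTransGen D.Adj v xₙ)

theorem AnswersGoodRequest.label_mem (h : AnswersGoodRequest S D x y w) {c : Bool × Sig}
    (hc : c ∈ w) : c.2 ∈ SigAlph S := by
  obtain ⟨L, hL, -, u, hu, col, rfl⟩ := h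
  obtain ⟨d, hd, rfl⟩ := List.mem_map.1 hc
  exact mem_SigAlph_of_mem_Qgood hL hu hd

theorem not_inSigma0_of_mem_Qgood {L : Language Sig} (hL : L ∈ Qgood S) {u u' : List Sig}
    (hu : u ∈ L) (hu' : u' ∈ L) {c d : Sig} (hc : c ∈ u) (hnc : ¬ inSigma0 S c)
    (hd : d ∈ u') : ¬ inSigma0 S d := by
  rcases Qgood_cases hL with hmark | hbase
  · obtain ⟨e, he, rfl⟩ := hmark u' hu'
    exact not_inSigma0_of_mem_markers (List.mem_singleton.1 hd ▸ he)
  · exact absurd ((hbase u hu).2 c hc) hnc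

theorem AnswersGoodRequest.not_inSigma0_of_source (hinv : PlayInvariant S a b x₁ xₙ D)
    (h : AnswersGoodRequest S D a y w) {c : Bool × Sig} (hc : c ∈ w) : ¬ inSigma0 S c.2 := by
  obtain ⟨L, hL, ⟨u, hu, col, hp⟩, u', hu', col', rfl⟩ := h
  obtain ⟨d, hd, rfl⟩ := List.mem_map.1 hc
  obtain ⟨e, u₀, rfl⟩ := List.exists_cons_of_ne_nil (Qgood_ne_nil hL hu)
  obtain ⟨z, hz, -⟩ := hp
  exact not_inSigma0_of_mem_Qgood hL hu hu' List.mem_cons_self (hinv.out_a _ _ hz) hd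

theorem AnswersGoodRequest.not_inSigma0_of_target (hinv : PlayInvariant S a b x₁ xₙ D)
    (h : AnswersGoodRequest S D x b w) {c : Bool × Sig} (hc : c ∈ w) : ¬ inSigma0 S c.2 := by
  obtain ⟨L, hL, ⟨u, hu, col, hp⟩, u', hu', col', rfl⟩ := h
  obtain ⟨d, hd, rfl⟩ := List.mem_map.1 hc
  obtain ⟨u₀, e, rfl⟩ := (List.eq_nil_or_concat' u).resolve_left (Qgood_ne_nil hL hu)
  obtain ⟨z, hz⟩ := exists_edge_of_pathSat_append_singleton (D := D) (w := paint col u₀)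
    (by simpa [paint] using hp)
  exact not_inSigma0_of_mem_Qgood hL hu hu' (by simp) (hinv.in_b _ _ hz) hd

theorem AnswersGoodRequest.inSigma0_of_two_le_length (h : AnswersGoodRequest S D x y w)
    (hw : 2 ≤ w.length) : ∀ c ∈ w, inSigma0 S c.2 := by
  obtain ⟨L, hL, -, u, hu, col, rfl⟩ := h
  rcases Qgood_cases hL with hmark | hbase
  · obtain ⟨c, -, rfl⟩ := hmark u hu
    simp [paint] at hw
  · intro c hc
    obtain ⟨d, hd, rfl⟩ := List.mem_map.1 hc
    exact (hbase u hu).2 d hd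

theorem AnswersGoodRequest.ne_of_two_le_length (hinv : PlayInvariant S a b x₁ xₙ D)
    (h : AnswersGoodRequest S D x y w) (hw : 2 ≤ w.length) : x ≠ a ∧ y ≠ b := by
  obtain ⟨c, hc⟩ := List.exists_mem_of_length_pos (show 0 < w.length by omega)
  have hc₀ := h.inSigma0_of_two_le_length hw c hc
  constructor
  · rintro rfl
    exact h.not_inSigma0_of_source hinv hc hc₀
  · rintro rfl
    exact h.not_inSigma0_of_target hinv hc hc₀

theorem PlayInvariant.reach_of_le (hinv : PlayInvariant S a b x₁ xₙ D)
    (hmono : ∀ p c q, D p c q → D' p c q) {v : V} (hv : activeV D v) :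
    (v ≠ a → ReflTransGen D'.Adj x₁ v) ∧ (v ≠ b → ReflTransGen D'.Adj v xₙ) :=
  (hinv.reach v hv).imp (fun hr hva => reflTransGen_adj_mono hmono (hr hva))
    (fun hr hvb => reflTransGen_adj_mono hmono (hr hvb))

theorem AnswersGoodRequest.reach (hinv : PlayInvariant S a b x₁ xₙ D)
    (h : AnswersGoodRequest S D x y w) {vs : List V} (hlen : vs.length + 1 = w.length)
    (hmono : ∀ p c q, D p c q → D' p c q)
    (hchain : ∀ p c q, chainOf (x :: vs ++ [y]) w p c q → D' p c q) {v : V}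
    (hv : v ∈ x :: vs ++ [y]) :
    (v ≠ a → ReflTransGen D'.Adj x₁ v) ∧ (v ≠ b → ReflTransGen D'.Adj v xₙ) := by
  have hxy : activeV D x ∧ activeV D y := by
    obtain ⟨L, hL, ⟨u, hu, col, hp⟩, -⟩ := h
    exact activeV_of_pathSat (by simpa [paint] using Qgood_ne_nil hL hu) hp
  rcases List.mem_cons.1 hv with rfl | hv
  · exact hinv.reach_of_le hmono hxy.1
  rcases List.mem_append.1 hv with hv | hv
  · obtain ⟨hxa, hyb⟩ := h.ne_of_two_le_length hinv (by
      have := List.length_pos_of_mem hv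
      omega)
    obtain ⟨hxv, hvy⟩ := reflTransGen_of_chainOf (l := vs ++ [y]) (by simpa using hlen) hchain
      v (List.mem_cons_of_mem _ (List.mem_append_left _ hv))
    rw [List.getLast_cons (by simp), List.getLast_append_singleton] at hvy
    exact ⟨fun _ => ((hinv.reach_of_le hmono hxy.1).1 hxa).trans hxv,
      fun _ => hvy.trans ((hinv.reach_of_le hmono hxy.2).2 hyb)⟩
  · rw [List.mem_singleton.1 hv]
    exact hinv.reach_of_le hmono hxy.2

end Invariant

section Play

variable {V : Type} {S : Finset ℕ} {F : Finset ((Bool × ℕ) × (Bool × ℕ))}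
  {D D' : DB V (Bool × Sig)} {a b x₁ xₙ : V}

theorem PlayInvariant.step (hinv : PlayInvariant S a b x₁ xₙ D)
    (hstep : Step (biRC (QQ S F)) D D') (hII : SatisfiesPrincipleII S F D) :
    PlayInvariant S a b x₁ xₙ D' := by
  have hnew : ∀ {p c q}, D' p c q → D p c q ∨ ∃ x y vs w, AnswersGoodRequest S D x y w ∧
      vs.length + 1 = w.length ∧ (∀ v ∈ vs, ¬ activeV D v) ∧
      (∀ p c q, chainOf (x :: vs ++ [y]) w p c q → D' p c q) ∧
      chainOf (x :: vs ++ [y]) w p c q := fun h =>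
    (hstep.cases h).imp_right fun ⟨r, hr, w, hw, vs, hrest⟩ =>
      ⟨r.1, r.2.1, vs, w, answersGoodRequest_of_mem_rq hII hr hw, hrest⟩
  refine ⟨fun p c q h => ?_, fun c q h => ?_, fun p c h => ?_,
    activeV_mono hstep.mono hinv.active_a, activeV_mono hstep.mono hinv.active_b, ?_⟩
  · rcases hnew h with h | ⟨x, y, vs, w, hans, -, -, -, hc⟩
    · exact hinv.labels p c q h
    · exact hans.label_mem (chainOf_mem hc).2.1
  · rcases hnew h with h | ⟨x, y, vs, w, hans, -, hfresh, -, hc⟩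
    · exact hinv.out_a c q h
    · obtain rfl : a = x := (List.mem_cons.1 (chainOf_source_mem hc)).resolve_right
        fun ha => hfresh a ha hinv.active_a
      exact hans.not_inSigma0_of_source hinv (chainOf_mem hc).2.1
  · rcases hnew h with h | ⟨x, y, vs, w, hans, -, hfresh, -, hc⟩
    · exact hinv.in_b p c h
    · obtain rfl : b = y := List.mem_singleton.1
        ((List.mem_append.1 (chainOf_target_mem hc)).resolve_left
          fun hb => hfresh b hb hinv.active_b)
      exact hans.not_inSigma0_of_target hinv (chainOf_mem hc).2.1
  · rintro v ⟨c, u, hvu | huv⟩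
    · rcases hnew hvu with h | ⟨x, y, vs, w, hans, hlen, -, hchain, hc⟩
      · exact hinv.reach_of_le hstep.mono ⟨c, u, Or.inl h⟩
      · exact hans.reach hinv hlen hstep.mono hchain
          (List.mem_append_left _ (chainOf_source_mem hc))
    · rcases hnew huv with h | ⟨x, y, vs, w, hans, hlen, -, hchain, hc⟩
      · exact hinv.reach_of_le hstep.mono ⟨c, u, Or.inr h⟩
      · exact hans.reach hinv hlen hstep.mono hchain
          (List.mem_cons_of_mem _ (chainOf_target_mem hc))

theorem playInvariant_start {us : List Sig} (hus : ∀ c ∈ us, inSigma0 S c) {vs : List V}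
    (hlen : vs.length = us.length) (hnd : (a :: x₁ :: vs ++ [b]).Nodup)
    (hD : ∀ p c q, D p c q ↔
      chainOf (a :: x₁ :: vs ++ [b]) (greenW (Sig.alpha :: (us ++ [Sig.omega]))) p c q) :
    PlayInvariant S a b x₁ ((x₁ :: vs).getLast (List.cons_ne_nil _ _)) D := by
  have hlabels : labelsIn D (Prod.snd ⁻¹' SigAlph S) := fun p c q h => by
    obtain ⟨d, hd, rfl⟩ := List.mem_map.1 (chainOf_mem ((hD p c q).1 h)).2.1
    exact mem_SigAlph_of_mem_start hus hd
  have hw : greenW (Sig.alpha :: (us ++ [Sig.omega])) =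
      ((true, Sig.alpha) :: greenW us) ++ [(true, Sig.omega)] := by simp [greenW]
  rw [hw] at hD
  have ha : a ∉ x₁ :: vs ++ [b] := (List.nodup_cons.1 hnd).1
  have hb : b ∉ a :: x₁ :: vs := fun hb =>
    List.disjoint_of_nodup_append hnd hb (List.mem_singleton_self b)
  have hprefix : ∀ p c q, chainOf (a :: x₁ :: vs) ((true, Sig.alpha) :: greenW us) p c q →
      D p c q :=
    fun p c q h => (hD p c q).2 (chainOf_append_singleton h)
  have hsuffix : ∀ p c q, chainOf (x₁ :: vs ++ [b]) (greenW us ++ [(true, Sig.omega)]) p c q →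
      D p c q :=
    fun p c q h => (hD p c q).2 (Or.inr h)
  have hreach_a := reflTransGen_of_chainOf (l := x₁ :: vs) (by simp [greenW, hlen]) hprefix
  have hreach_x₁ := reflTransGen_of_chainOf (l := vs ++ [b]) (by simp [greenW, hlen]) hsuffix
  refine ⟨hlabels, fun c q h => ?_, fun p c h => ?_,
    ⟨_, x₁, Or.inl (hprefix _ _ _ (Or.inl ⟨rfl, rfl, rfl⟩))⟩, ?_,
    fun v hv => ⟨fun hva => ?_, fun hvb => ?_⟩⟩
  · rcases (hD a c q).1 h with ⟨-, rfl, -⟩ | h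
    · exact not_inSigma0_of_mem_markers (by simp)
    · exact absurd (List.mem_append_left _ (chainOf_source_mem h)) ha
  · rcases chainOf_append_singleton_cases (by simp [greenW, hlen]) ((hD p c b).1 h) with h | rfl
    · exact absurd (List.mem_of_mem_tail (chainOf_mem h).2.2) hb
    · exact not_inSigma0_of_mem_markers (by simp)
  · obtain ⟨hx₁b, -⟩ := hreach_x₁ b (by simp)
    rcases hx₁b.cases_tail with hbx | ⟨z, -, c, hz⟩
    · exact absurd (hbx ▸ List.mem_cons_of_mem _ List.mem_cons_self) hb
    · exact ⟨c, z, Or.inr hz⟩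
  · exact (hreach_x₁ v ((List.mem_cons.1 (mem_of_activeV_of_chainOf hD hv)).resolve_left hva)).1
  · have hv' : v ∈ a :: x₁ :: vs :=
      (List.mem_append.1 (mem_of_activeV_of_chainOf hD hv)).resolve_right (by simpa using hvb)
    simpa using (hreach_a v hv').2

theorem exists_parallel_edge {seq : ℕ → DB V (Bool × Sig)} {H : DB V (Bool × Sig)}
    (hstep : ∀ i, Step (biRC (QQ S F)) (seq i) (seq (i + 1)))
    (hH : ∀ p c q, H p c q ↔ ∃ i, seq i p c q)
    (hlabels : ∀ i, labelsIn (seq i) (Prod.snd ⁻¹' SigAlph S))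
    {p q : V} {c : Bool × Sig} (h : H p c q) (col : Bool) : ∃ c', H p (col, c') q := by
  obtain ⟨col₀, d⟩ := c
  by_cases hcol : col = col₀
  · exact ⟨d, hcol ▸ h⟩
  obtain ⟨i, hi⟩ := (hH _ _ _).1 h
  obtain ⟨L, hL, hdL⟩ := exists_Qgood_singleton (hlabels i p _ q hi)
  have ht : (⟨paint col₀ '' L, paint col '' L⟩ : RCon (Bool × Sig)) ∈ biRC (QQ S F) := by
    have hQQ : L ∈ QQ S F := Or.inl (Or.inl hL)
    cases col₀ <;> cases col
    exacts [absurd rfl hcol, Or.inr ⟨L, hQQ, rfl⟩, Or.inl ⟨L, hQQ, rfl⟩, absurd rfl hcol]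
  obtain ⟨_, ⟨u, hu, rfl⟩, hp⟩ :=
    langSat_rhs_of_play hstep hH ht ⟨_, ⟨[d], hdL, rfl⟩, q, hi, rfl⟩
  obtain ⟨n, hn⟩ := exists_length_of_Qgood hL
  obtain ⟨c', rfl⟩ := List.length_eq_one_iff.1 ((hn u hu).trans (hn [d] hdL).symm)
  obtain ⟨_, hc', rfl⟩ := hp
  exact ⟨c', hc'⟩

end Play

theorem all_paths_general (S : Finset ℕ) (F : Finset ((Bool × ℕ) × (Bool × ℕ)))
    {V : Type} (a b : V) (q : List Sig) (hq : q ∈ Qstart S)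
    (vs : List V) (hvs : vs ≠ [])
    (hlen : vs.length + 1 = (greenW q).length)
    (hnd : (a :: vs ++ [b]).Nodup)
    (seq : ℕ → DB V (Bool × Sig))
    (h0 : ∀ p c r, seq 0 p c r ↔ chainOf (a :: vs ++ [b]) (greenW q) p c r)
    (hstep : ∀ i, Step (biRC (QQ S F)) (seq i) (seq (i + 1)))
    (hPII : ∀ i x y, ∀ L ∈ Qbad S F ∪ Qugly S,
      ¬ langSat (seq i) (greenL L) x y ∧ ¬ langSat (seq i) (redL L) x y)
    (H : DB V (Bool × Sig)) (hH : ∀ p c r, H p c r ↔ ∃ i, seq i p c r) :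
    ∀ y : V, activeV H y →
      (y ≠ a →
        (∃ w : List Sig, pathSat H (vs.head hvs) (redW w) y) ∧
        (∃ w : List Sig, pathSat H (vs.head hvs) (greenW w) y)) ∧
      (y ≠ b →
        (∃ w : List Sig, pathSat H y (redW w) (vs.getLast hvs)) ∧
        (∃ w : List Sig, pathSat H y (greenW w) (vs.getLast hvs))) := by
  obtain ⟨us, hus, -, rfl⟩ := hq
  obtain ⟨x₁, xs, rfl⟩ := List.exists_cons_of_ne_nil hvs
  have hinv : ∀ i, PlayInvariant S a b x₁ ((x₁ :: xs).getLast hvs) (seq i) := by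
    intro i
    induction i with
    | zero =>
      exact playInvariant_start (inSigma0_of_mem_kstar_startBlock hus)
        (by simpa [greenW] using hlen) hnd h0
    | succ i ih => exact ih.step (hstep i) (hPII i)
  have hpar : ∀ col p c r, H p c r → ∃ c', H p (col, c') r := fun col _ _ _ h =>
    exists_parallel_edge hstep hH (fun i => (hinv i).labels) h col
  have hpaths : ∀ x z, ReflTransGen H.Adj x z →
      (∃ w, pathSat H x (redW w) z) ∧ ∃ w, pathSat H x (greenW w) z := fun x z hxz =>
    ⟨exists_pathSat_paint_of_reflTransGen false (hpar false) hxz,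
      exists_pathSat_paint_of_reflTransGen true (hpar true) hxz⟩
  intro y hy
  obtain ⟨i, hyi⟩ := exists_activeV_of_play hH hy
  have hseqH : ∀ p c r, seq i p c r → H p c r := fun p c r h => (hH p c r).2 ⟨i, h⟩
  obtain ⟨hfrom, hto⟩ := (hinv i).reach y hyi
  exact ⟨fun hya => hpaths _ _ (reflTransGen_adj_mono hseqH (hfrom hya)),
    fun hyb => hpaths _ _ (reflTransGen_adj_mono hseqH (hto hyb))⟩

/-- In a final position `H` of a play obeying Principles I and II,
whose initial chain has vertices `a, x₁, …, xₙ, b` in path order (the internal vertices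
being listed by `vs`, so `x₁ = vs.head` and `xₙ = vs.getLast`), every vertex `y ≠ a` of
`H` is reachable from `x₁` both by a red path and by a green path, and from every vertex
`y ≠ b` of `H` the vertex `xₙ` is reachable both by a red path and by a green path. -/
theorem all_paths (S : Finset ℕ) (F : Finset ((Bool × ℕ) × (Bool × ℕ)))
    (hS : 0 ∈ S) (hF : ∀ p ∈ F, p.1.2 ∈ S ∧ p.2.2 ∈ S)
    {V : Type} (a b : V) (q : List Sig) (hq : q ∈ Qstart S)
    (vs : List V) (hvs : vs ≠ [])
    (hlen : vs.length + 1 = (greenW q).length)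
    (hnd : (a :: vs ++ [b]).Nodup)
    (seq : ℕ → DB V (Bool × Sig))
    (h0 : ∀ p c r, seq 0 p c r ↔ chainOf (a :: vs ++ [b]) (greenW q) p c r)
    (hstep : ∀ i, Step (biRC (QQ S F)) (seq i) (seq (i + 1)))
    (hPII : ∀ i x y, ∀ L ∈ Qbad S F ∪ Qugly S,
      ¬ langSat (seq i) (greenL L) x y ∧ ¬ langSat (seq i) (redL L) x y)
    (H : DB V (Bool × Sig)) (hH : ∀ p c r, H p c r ↔ ∃ i, seq i p c r) :
    ∀ y : V, activeV H y →
      (y ≠ a →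
        (∃ w : List Sig, pathSat H (vs.head hvs) (redW w) y) ∧
        (∃ w : List Sig, pathSat H (vs.head hvs) (greenW w) y)) ∧
      (y ≠ b →
        (∃ w : List Sig, pathSat H y (redW w) (vs.getLast hvs)) ∧
        (∃ w : List Sig, pathSat H y (greenW w) (vs.getLast hvs))) :=
  all_paths_general S F a b q hq vs hvs hlen hnd seq h0 hstep hPII H hH
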